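/- arXiv:2605.22969 — 2 statements merged into one kernel-verified Lean document; each statement's English description precedes it below -/
import Mathlib

section
/- Let q > 1 be an odd natural number. If there is no odd integer m > 3 dividing q - 1 or q + 1, then q ∈ {3, 5, 7}. -/
theorem stmt_0 (q : ℕ) (hq_odd : Odd q) (hq : 1 < q)
    (h : ¬ ∃ m : ℕ, Odd m ∧ 3 < m ∧ (m ∣ q - 1 ∨ m ∣ q + 1)) :
    q = 3 ∨ q = 5 ∨ q = 7 := by
  obtain ⟨k, hk⟩ := hq_odd
  by_contra hc
  push_neg at hc
  have h9 : 9 ≤ q := by omega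
  rcases Nat.even_or_odd k with ⟨j, hj⟩ | ⟨j, hj⟩
  · -- q % 4 = 1, so q+1 ≡ 2 mod 4, m = (q+1)/2 odd
    exact h ⟨(q + 1) / 2, ⟨j, by omega⟩, by omega, Or.inr ⟨2, by omega⟩⟩
  · -- q % 4 = 3, so q-1 ≡ 2 mod 4
    exact h ⟨(q - 1) / 2, ⟨j, by omega⟩, by omega, Or.inl ⟨2, by omega⟩⟩
end

section
/- Let F be a field, n ≥ 2, and let s ∈ GL(n, F) be diagonalizable with eigenvalues λ, λ⁻¹, and 1 having geometric multiplicities 1, 1, and n - 2 respectively, where λ ∈ F has odd multiplicative order m > 3. If z is a scalar matrix such that s·z is conjugate to s in GL(n, F), then z = 1. -/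
theorem stmt_3 {F : Type*} [Field F] (n : ℕ) (hn : 2 ≤ n) (l : F) (hl : IsUnit l)
    (m : ℕ) (hm : orderOf hl.unit = m) (hmodd : Odd m) (hm3 : 3 < m)
    (s z : Matrix (Fin n) (Fin n) F) (ζ : Fˣ)
    (hs : s = Matrix.diagonal (fun i : Fin n =>
      if (i : ℕ) = 0 then l else if (i : ℕ) = 1 then l⁻¹ else 1))
    (hz : z = (ζ : F) • (1 : Matrix (Fin n) (Fin n) F))
    (hconj : ∃ g : (Matrix (Fin n) (Fin n) F)ˣ,
      (g : Matrix (Fin n) (Fin n) F) * (s * z) * ((g⁻¹ : (Matrix (Fin n) (Fin n) F)ˣ) : Matrix (Fin n) (Fin n) F) = s) :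
    ζ = 1 := by
  obtain ⟨g, hg⟩ := hconj
  have hl0 : l ≠ 0 := hl.ne_zero
  set d : Fin n → F := fun i : Fin n =>
    if (i : ℕ) = 0 then l else if (i : ℕ) = 1 then l⁻¹ else 1 with hd
  -- order helper
  have hpow : ∀ k : ℕ, l ^ k = 1 → m ∣ k := by
    intro k hk
    rw [← hm]
    apply orderOf_dvd_of_pow_eq_one
    ext
    push_cast
    simpa [hl.unit_spec] using hk
  -- the key transfer of eigenvalues
  have key : ∀ x : F, (∃ i, (ζ : F) * d i = x) → (∃ i, d i = x) := by
    rintro x ⟨i, hi⟩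
    have h2 : (g : Matrix (Fin n) (Fin n) F) * (x • 1) *
        ((g⁻¹ : (Matrix (Fin n) (Fin n) F)ˣ) : Matrix (Fin n) (Fin n) F) = x • 1 := by
      rw [Matrix.mul_smul, Matrix.mul_one, Matrix.smul_mul, ← Units.val_mul, mul_inv_cancel,
        Units.val_one]
    have h1 : (g : Matrix (Fin n) (Fin n) F) * (s * z - x • 1) *
        ((g⁻¹ : (Matrix (Fin n) (Fin n) F)ˣ) : Matrix (Fin n) (Fin n) F) = s - x • 1 := by
      rw [Matrix.mul_sub, Matrix.sub_mul, hg, h2]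
    have hdet : (s * z - x • 1).det = (s - x • 1).det := by
      have h3 := congrArg Matrix.det h1
      rw [Matrix.det_mul, Matrix.det_mul] at h3
      have h4 : (g : Matrix (Fin n) (Fin n) F).det *
          ((g⁻¹ : (Matrix (Fin n) (Fin n) F)ˣ) : Matrix (Fin n) (Fin n) F).det = 1 := by
        rw [← Matrix.det_mul, ← Units.val_mul, mul_inv_cancel, Units.val_one, Matrix.det_one]
      calc (s * z - x • 1).det = (g : Matrix (Fin n) (Fin n) F).det * (s * z - x • 1).det *
            ((g⁻¹ : (Matrix (Fin n) (Fin n) F)ˣ) : Matrix (Fin n) (Fin n) F).det := by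
            rw [mul_comm (g : Matrix (Fin n) (Fin n) F).det, mul_assoc, h4, mul_one]
        _ = (s - x • 1).det := h3
    have hsz : s * z = Matrix.diagonal (fun i => (ζ : F) * d i) := by
      rw [hs, hz, Matrix.mul_smul, Matrix.mul_one, ← Matrix.diagonal_smul]
      rfl
    rw [hsz, hs, Matrix.smul_one_eq_diagonal, Matrix.diagonal_sub, Matrix.diagonal_sub,
      Matrix.det_diagonal, Matrix.det_diagonal] at hdet
    have hz0 : ∏ j : Fin n, ((ζ : F) * d j - x) = 0 :=
      Finset.prod_eq_zero (Finset.mem_univ i) (by rw [hi, sub_self])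
    rw [hz0] at hdet
    obtain ⟨j, -, hj⟩ := Finset.prod_eq_zero_iff.mp hdet.symm
    exact ⟨j, sub_eq_zero.mp hj⟩
  have hzero : (0 : ℕ) < n := by omega
  obtain ⟨i, hi⟩ := key ((ζ : F) * l) ⟨⟨0, hzero⟩, by simp [hd]⟩
  obtain ⟨j, hj⟩ := key ((ζ : F) * l⁻¹) ⟨⟨1, hn⟩, by simp [hd]⟩
  simp only [hd] at hi hj
  -- case analysis
  have hζl : (ζ : F) = 1 ∨ (ζ : F) * l ^ 2 = 1 ∨ (ζ : F) * l = 1 := by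
    split_ifs at hi with h0 h1
    · left
      exact (mul_right_cancel₀ hl0 (by rw [one_mul]; exact hi)).symm
    · right; left
      field_simp at hi ⊢
      linear_combination -hi
    · right; right
      exact hi.symm
  have hζr : (ζ : F) = 1 ∨ (ζ : F) = l ^ 2 ∨ (ζ : F) = l := by
    split_ifs at hj with h0 h1
    · right; left
      field_simp at hj
      linear_combination -hj
    · left
      have hli : l⁻¹ ≠ 0 := inv_ne_zero hl0
      exact (mul_right_cancel₀ hli (by rw [one_mul]; exact hj)).symm
    · right; right
      field_simp at hj
      exact hj.symm
  have habs : ∀ k : ℕ, 0 < k → k ≤ 4 → l ^ k = 1 → False := by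
    intro k hk1 hk4 hlk
    have hdvd := hpow k hlk
    have hle : m ≤ 4 := le_trans (Nat.le_of_dvd hk1 hdvd) hk4
    have : m = 4 := by omega
    rw [this] at hmodd
    revert hmodd; decide
  have hζ1 : (ζ : F) = 1 := by
    rcases hζl with h | h | h
    · exact h
    · rcases hζr with h' | h' | h'
      · exact h'
      · exact absurd (by rw [h'] at h; linear_combination h) (fun hc => habs 4 (by norm_num) le_rfl hc)
      · exact absurd (by rw [h'] at h; linear_combination h) (fun hc => habs 3 (by norm_num) (by norm_num) hc)
    · rcases hζr with h' | h' | h'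
      · exact h'
      · exact absurd (by rw [h'] at h; linear_combination h) (fun hc => habs 3 (by norm_num) (by norm_num) hc)
      · exact absurd (by rw [h'] at h; linear_combination h) (fun hc => habs 2 (by norm_num) (by norm_num) hc)
  exact Units.ext (by simpa using hζ1)
end
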